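/- arXiv:1610.08360 — 6 statements merged into one kernel-verified Lean document; each statement's English description precedes it below -/
import Mathlib

section
/- Suppose Y = r(X) + ε where the error ε is independent of the covariate X, and suppose responses are missing at random (MAR), i.e. the conditional expectation of the indicator δ given (X, Y) equals π(X) for a measurable function π of X alone. Then ε is independent of the pair (X, δ). -/
/-!
Since `ε = Y - r(X)`, the events `{ε ∈ A, X ∈ C}` are `σ(X, Y)`-measurable, so MAR turns
`P(ε ∈ A, X ∈ C, δ = 1)` into `E[π(X); ε ∈ A, X ∈ C]`, which factorises by independence of `ε`
and `X` as `P(ε ∈ A) E[π(X); X ∈ C] = P(ε ∈ A) P(X ∈ C, δ = 1)`. The same argument with `1 - δ`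
and `1 - π` handles `δ = 0`, and as `δ` is `{0, 1}`-valued these events determine the law
of `(X, δ)`.
-/

open MeasureTheory ProbabilityTheory Set

section

variable {Ω β γ : Type*} {m mΩ : MeasurableSpace Ω} {μ : Measure Ω}
  [MeasurableSpace β] [MeasurableSpace γ] {ε : Ω → γ} {X : Ω → β}

lemma ProbabilityTheory.IndepFun.setIntegral_preimage_inter_preimage_eq_mul
    (hind : IndepFun ε X μ) (hε : Measurable ε) (hX : Measurable X) {g : β → ℝ}
    (hg : Measurable g) {A : Set γ} {C : Set β} (hA : MeasurableSet A) (hC : MeasurableSet C) :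
    ∫ ω in ε ⁻¹' A ∩ X ⁻¹' C, g (X ω) ∂μ = μ.real (ε ⁻¹' A) * ∫ ω in X ⁻¹' C, g (X ω) ∂μ := by
  have hprod := hind.integral_fun_comp_mul_comp hε.aemeasurable hX.aemeasurable
    (measurable_one.indicator hA).aestronglyMeasurable (hg.indicator hC).aestronglyMeasurable
  simp only [← indicator_comp_right, ← inter_indicator_mul, Function.comp_apply, Pi.one_comp,
    Pi.one_apply, one_mul] at hprod
  rwa [integral_indicator ((hε hA).inter (hX hC)), integral_indicator (hX hC),
    integral_indicator_one (hε hA)] at hprod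

lemma measureReal_inter_inter_eq_mul_of_condExp_indicator_eq
    [IsFiniteMeasure μ] (hm : m ≤ mΩ) (hεm : Measurable[m] ε) (hXm : Measurable[m] X)
    (hind : IndepFun ε X μ) {D : Set Ω} (hD : MeasurableSet D) {g : β → ℝ} (hg : Measurable g)
    (hcond : μ[D.indicator 1 | m] =ᵐ[μ] fun ω => g (X ω)) {A : Set γ} {C : Set β}
    (hA : MeasurableSet A) (hC : MeasurableSet C) :
    μ.real (ε ⁻¹' A ∩ X ⁻¹' C ∩ D) = μ.real (ε ⁻¹' A) * μ.real (X ⁻¹' C ∩ D) := by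
  have hDint : Integrable (D.indicator (1 : Ω → ℝ)) μ := (integrable_const 1).indicator hD
  have hS : ∀ S, MeasurableSet[m] S → μ.real (S ∩ D) = ∫ ω in S, g (X ω) ∂μ := fun S hS => by
    rw [← setIntegral_congr_ae (hm S hS) (hcond.mono fun _ h _ => h),
      setIntegral_condExp hm hDint hS, integral_indicator_one hD, measureReal_restrict_apply hD,
      inter_comm]
  rw [hS _ ((hεm hA).inter (hXm hC)), hS _ (hXm hC)]
  exact hind.setIntegral_preimage_inter_preimage_eq_mul (hεm.mono hm le_rfl) (hXm.mono hm le_rfl)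
    hg hA hC

lemma indepFun_prodMk_of_measureReal_inter_eq_mul [IsFiniteMeasure μ] {δ : Ω → ℝ}
    (hε : Measurable ε) (hX : Measurable X) (hδ : Measurable δ) (hδ01 : ∀ ω, δ ω = 0 ∨ δ ω = 1)
    (h : ∀ i ∈ ({0, 1} : Set ℝ), ∀ ⦃A : Set γ⦄ ⦃C : Set β⦄, MeasurableSet A → MeasurableSet C →
      μ.real (ε ⁻¹' A ∩ X ⁻¹' C ∩ δ ⁻¹' {i}) = μ.real (ε ⁻¹' A) * μ.real (X ⁻¹' C ∩ δ ⁻¹' {i})) :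
    IndepFun ε (fun ω => (X ω, δ ω)) μ := by
  rw [indepFun_iff_measure_inter_preimage_eq_mul]
  intro A B hA hB
  have hB₀ : MeasurableSet ((·, (0 : ℝ)) ⁻¹' B) := measurable_prodMk_right hB
  have hB₁ : MeasurableSet ((·, (1 : ℝ)) ⁻¹' B) := measurable_prodMk_right hB
  have hdisj : Disjoint (δ ⁻¹' {0}) (δ ⁻¹' {1}) :=
    (disjoint_singleton.2 zero_ne_one).preimage δ
  have hpre : (fun ω => (X ω, δ ω)) ⁻¹' B =
      X ⁻¹' ((·, 0) ⁻¹' B) ∩ δ ⁻¹' {0} ∪ X ⁻¹' ((·, 1) ⁻¹' B) ∩ δ ⁻¹' {1} := by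
    ext ω
    rcases hδ01 ω with h | h <;> simp [h]
  have hreal : μ.real (ε ⁻¹' A ∩ (fun ω => (X ω, δ ω)) ⁻¹' B) =
      μ.real (ε ⁻¹' A) * μ.real ((fun ω => (X ω, δ ω)) ⁻¹' B) := by
    rw [hpre, inter_union_distrib_left, ← inter_assoc, ← inter_assoc,
      measureReal_union (hdisj.mono inter_subset_right inter_subset_right)
        ((hX hB₁).inter (hδ (measurableSet_singleton 1))),
      measureReal_union (hdisj.mono inter_subset_right inter_subset_right)
        ((hε hA).inter (hX hB₁) |>.inter (hδ (measurableSet_singleton 1))),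
      h 0 (by simp) hA hB₀, h 1 (by simp) hA hB₁, mul_add]
  rwa [measureReal_def, measureReal_def, measureReal_def, ← ENNReal.toReal_mul,
    ENNReal.toReal_eq_toReal_iff' (by finiteness) (by finiteness)] at hreal

end

/-- In the nonparametric regression model `Y = r(X) + ε` with error `ε`
independent of the covariate `X`, if responses are missing at random (the conditional
expectation of the indicator `δ` given `(X, Y)` equals `π(X)` for a measurable `π` of `X`
alone), then `ε` is independent of the pair `(X, δ)`. -/
theorem error_indep_of_MAR
    {Ω : Type*} [MeasurableSpace Ω] (μ : Measure Ω) [IsProbabilityMeasure μ]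
    {m : ℕ} (X : Ω → (Fin m → ℝ)) (ε : Ω → ℝ) (δ : Ω → ℝ) (Y : Ω → ℝ)
    (r : (Fin m → ℝ) → ℝ) (π : (Fin m → ℝ) → ℝ)
    (hX : Measurable X) (hε : Measurable ε) (hδ : Measurable δ)
    (hr : Measurable r) (hπ : Measurable π)
    (hδ01 : ∀ ω, δ ω = 0 ∨ δ ω = 1)
    (hY : ∀ ω, Y ω = r (X ω) + ε ω)
    (hindep : IndepFun ε X μ)
    (hMAR : MeasureTheory.condExp
        (MeasurableSpace.comap (fun ω => (X ω, Y ω)) inferInstance) μ δ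
        =ᵐ[μ] fun ω => π (X ω)) :
    IndepFun ε (fun ω => (X ω, δ ω)) μ := by
  have hYm : Measurable Y := by
    rw [funext hY]
    exact (hr.comp hX).add hε
  have hm := (hX.prodMk hYm).comap_le
  have hXY := comap_measurable (m := inferInstance) fun ω => (X ω, Y ω)
  have hXm : Measurable[MeasurableSpace.comap (fun ω => (X ω, Y ω)) inferInstance] X :=
    measurable_fst.comp hXY
  have hεm : Measurable[MeasurableSpace.comap (fun ω => (X ω, Y ω)) inferInstance] ε := by
    have hεY : ε = (fun p => p.2 - r p.1) ∘ fun ω => (X ω, Y ω) := by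
      ext ω
      simp [hY]
    rw [hεY]
    exact (measurable_snd.sub (hr.comp measurable_fst)).comp hXY
  have hδ₁ : (δ ⁻¹' {1}).indicator 1 = δ := by
    ext ω; rcases hδ01 ω with h | h <;> simp [h]
  have hδ₀ : (δ ⁻¹' {0}).indicator 1 = 1 - δ := by
    ext ω; rcases hδ01 ω with h | h <;> simp [h]
  have hδint : Integrable δ μ :=
    hδ₁ ▸ (integrable_const 1).indicator (hδ (measurableSet_singleton 1))
  refine indepFun_prodMk_of_measureReal_inter_eq_mul hε hX hδ hδ01 ?_
  rintro i (rfl | rfl) A C hA hC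
  · refine measureReal_inter_inter_eq_mul_of_condExp_indicator_eq hm hεm hXm hindep
      (hδ (measurableSet_singleton 0)) (g := 1 - π) (measurable_const.sub hπ) ?_ hA hC
    rw [hδ₀]
    filter_upwards [condExp_sub (integrable_const 1) hδint _, hMAR] with ω hsub hω
    rw [Pi.one_def, hsub, Pi.sub_apply, condExp_const hm, hω]
    rfl
  · exact measureReal_inter_inter_eq_mul_of_condExp_indicator_eq hm hεm hXm hindep
      (hδ (measurableSet_singleton 1)) hπ (by rwa [hδ₁]) hA hC
end

section
/- Suppose Y = r(X) + ε where the error ε is independent of the covariate X, responses are missing at random (the conditional expectation of δ given (X, Y) equals π(X) for a measurable function π of X alone), and P(δ = 1) > 0. Then the conditional distribution of ε given δ = 1 equals the unconditional distribution of ε; in particular, if E[ε²] < ∞ then E[ε | δ = 1] = E[ε] and Var(ε | δ = 1) = Var(ε). -/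
open MeasureTheory ProbabilityTheory

/-! Since `ε = Y - r(X)` is a function of `(X, Y)`, missingness at random gives
`E[δ 1{ε ∈ B}] = E[π(X) 1{ε ∈ B}]`, and the independence of `ε` and `X` factors the right side
as `P(ε ∈ B) E[π(X)] = P(ε ∈ B) P(δ = 1)`. So `ε` is independent of the event `{δ = 1}`, and
conditioning on that event leaves the law of `ε`, hence all its moments, unchanged. -/

namespace ProbabilityTheory

variable {Ω β 𝓧 : Type*} {m mΩ : MeasurableSpace Ω} {μ : Measure Ω}
  [MeasurableSpace β] [MeasurableSpace 𝓧] {ε : Ω → β} {X : Ω → 𝓧}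

lemma setIntegral_preimage_eq_mul_integral_of_condExp_eq_comp [IsFiniteMeasure μ]
    {δ : Ω → ℝ} {π : 𝓧 → ℝ} (hm : m ≤ mΩ) (hεm : Measurable[m] ε) (hX : Measurable X)
    (hπ : Measurable π) (hindep : IndepFun ε X μ) (hδ : Integrable δ μ)
    (hcond : μ[δ|m] =ᵐ[μ] fun ω => π (X ω)) {B : Set β} (hB : MeasurableSet B) :
    ∫ ω in ε ⁻¹' B, δ ω ∂μ = μ.real (ε ⁻¹' B) * ∫ ω, δ ω ∂μ := by
  have hA : MeasurableSet[m] (ε ⁻¹' B) := hεm hB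
  calc ∫ ω in ε ⁻¹' B, δ ω ∂μ = ∫ ω in ε ⁻¹' B, π (X ω) ∂μ := by
        rw [← setIntegral_condExp hm hδ hA]
        exact setIntegral_congr_ae (hm _ hA) (hcond.mono fun ω h _ => h)
    _ = μ.real (ε ⁻¹' B) * ∫ ω, π (X ω) ∂μ :=
        Indep.setIntegral_eq_mul (hεm.comap_le.trans hm) hindep hX.aemeasurable ⟨B, hB, rfl⟩
          hπ.aestronglyMeasurable
    _ = μ.real (ε ⁻¹' B) * ∫ ω, δ ω ∂μ := by
        rw [← integral_congr_ae hcond, integral_condExp hm]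

lemma measure_preimage_inter_eq_mul_of_condExp_indicator_eq_comp [IsFiniteMeasure μ]
    {s : Set Ω} {π : 𝓧 → ℝ} (hm : m ≤ mΩ) (hεm : Measurable[m] ε) (hX : Measurable X)
    (hπ : Measurable π) (hindep : IndepFun ε X μ) (hs : MeasurableSet s)
    (hcond : μ[s.indicator 1|m] =ᵐ[μ] fun ω => π (X ω)) {B : Set β} (hB : MeasurableSet B) :
    μ (ε ⁻¹' B ∩ s) = μ (ε ⁻¹' B) * μ s := by
  have h := setIntegral_preimage_eq_mul_integral_of_condExp_eq_comp hm hεm hX hπ hindep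
    ((integrable_const 1).indicator hs) hcond hB
  rw [integral_indicator_one hs, integral_indicator_one hs, measureReal_restrict_apply hs,
    Set.inter_comm, measureReal_def, measureReal_def, measureReal_def, ← ENNReal.toReal_mul] at h
  exact (ENNReal.toReal_eq_toReal_iff' (measure_ne_top _ _) (by finiteness)).1 h

lemma identDistrib_cond_of_measure_preimage_inter_eq_mul [IsFiniteMeasure μ] {s : Set Ω}
    (hs : MeasurableSet s) (hμs : μ s ≠ 0) (hε : Measurable ε)
    (h : ∀ B, MeasurableSet B → μ (ε ⁻¹' B ∩ s) = μ (ε ⁻¹' B) * μ s) :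
    IdentDistrib ε ε μ[|s] μ where
  aemeasurable_fst := hε.aemeasurable
  aemeasurable_snd := hε.aemeasurable
  map_eq := by
    ext B hB
    rw [Measure.map_apply hε hB, Measure.map_apply hε hB, cond_apply hs, Set.inter_comm, h B hB,
      mul_comm, mul_assoc, ENNReal.mul_inv_cancel hμs (measure_ne_top _ _), mul_one]

end ProbabilityTheory

/-- In the nonparametric regression model `Y = r(X) + ε` with `ε`
independent of `X` and responses missing at random, with `P(δ = 1) > 0`, the conditional
distribution of `ε` given `δ = 1` equals the unconditional distribution of `ε`; in
particular, if `E[ε²] < ∞` then `E[ε | δ = 1] = E[ε]` and `Var(ε | δ = 1) = Var(ε)`. -/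
theorem error_dist_cond_complete_cases_of_MAR
    {Ω : Type*} [MeasurableSpace Ω] (μ : Measure Ω) [IsProbabilityMeasure μ]
    {m : ℕ} (X : Ω → (Fin m → ℝ)) (ε : Ω → ℝ) (δ : Ω → ℝ) (Y : Ω → ℝ)
    (r : (Fin m → ℝ) → ℝ) (π : (Fin m → ℝ) → ℝ)
    (hX : Measurable X) (hε : Measurable ε) (hδ : Measurable δ)
    (hr : Measurable r) (hπ : Measurable π)
    (hδ01 : ∀ ω, δ ω = 0 ∨ δ ω = 1)
    (hY : ∀ ω, Y ω = r (X ω) + ε ω)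
    (hindep : IndepFun ε X μ)
    (hMAR : MeasureTheory.condExp
        (MeasurableSpace.comap (fun ω => (X ω, Y ω)) inferInstance) μ δ
        =ᵐ[μ] fun ω => π (X ω))
    (hp : 0 < μ {ω | δ ω = 1}) :
    (ProbabilityTheory.cond μ {ω | δ ω = 1}).map ε = μ.map ε ∧
      (Integrable (fun ω => ε ω ^ 2) μ →
        (∫ ω, ε ω ∂(ProbabilityTheory.cond μ {ω | δ ω = 1}) = ∫ ω, ε ω ∂μ) ∧
          variance ε (ProbabilityTheory.cond μ {ω | δ ω = 1}) = variance ε μ) := by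
  set s := {ω | δ ω = 1}
  have hs : MeasurableSet s := hδ (measurableSet_singleton 1)
  have hδ_eq : δ = s.indicator 1 := funext fun ω => by rcases hδ01 ω with h | h <;> simp [s, h]
  have hXY : Measurable fun ω => (X ω, Y ω) :=
    hX.prodMk (funext hY ▸ (hr.comp hX).add hε)
  have hε_XY : Measurable[MeasurableSpace.comap (fun ω => (X ω, Y ω)) inferInstance] ε := by
    have hε_eq : ε = (fun p => p.2 - r p.1) ∘ fun ω => (X ω, Y ω) := funext fun ω => by
      simp [hY ω]
    rw [hε_eq]
    exact (measurable_snd.sub (hr.comp measurable_fst)).comp (comap_measurable _)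
  rw [hδ_eq] at hMAR
  have hid : IdentDistrib ε ε μ[|s] μ :=
    identDistrib_cond_of_measure_preimage_inter_eq_mul hs hp.ne' hε fun _ hB =>
      measure_preimage_inter_eq_mul_of_condExp_indicator_eq_comp hXY.comap_le hε_XY hX hπ hindep
        hs hMAR hB
  exact ⟨hid.map_eq, fun _ => ⟨hid.integral_eq, hid.variance_eq⟩⟩
end

section
/- Let f be a probability density on ℝ satisfying Assumption F, whose distribution F has mean zero and variance σ² ∈ (0, ∞). Then the orthogonal projection of the score function ℓ = −f′/f onto the subspace S of L²(F) is ℓ₀(z) = ℓ(z) − z/σ². -/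
/-!
Since `S` is by definition the orthogonal complement of `span {1, z}` in `L²(F)`, the difference
`ℓ - ℓ₀ = z / σ²` is orthogonal to `S`, and everything reduces to `ℓ₀ ∈ S`, i.e. to the score
identities `∫ ℓ dF = 0` and `∫ z ℓ(z) dF = 1`. Since `f' = 0` a.e. on `{f = 0}` (where `f ≥ 0` is
minimal), these read `∫ f' = 0` and `∫ z f'(z) dz = -1 = -∫ f`: both hold because a function which
is the primitive of an integrable function and is itself integrable vanishes at `±∞`, applied to
`f` and, after an integration by parts, to `z f(z)`.
-/

open MeasureTheory ProbabilityTheory Filter Set Topology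

lemma volume_eq_top_of_mem_atTop {s : Set ℝ} (hs : s ∈ atTop) : volume s = ⊤ := by
  obtain ⟨b, hb⟩ := mem_atTop_sets.1 hs
  exact top_le_iff.1 (Real.volume_Ici (a := b) ▸ measure_mono fun x hx => hb x hx)

lemma volume_eq_top_of_mem_atBot {s : Set ℝ} (hs : s ∈ atBot) : volume s = ⊤ := by
  obtain ⟨b, hb⟩ := mem_atBot_sets.1 hs
  exact top_le_iff.1 (Real.volume_Iic (a := b) ▸ measure_mono fun x hx => hb x hx)

section Primitive

variable {f f' : ℝ → ℝ}

theorem locallyIntegrable_of_sub_eq_intervalIntegral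
    (hAC : ∀ a b, f b - f a = ∫ z in a..b, f' z) (hf : ∫ z, f z ≠ 0) :
    LocallyIntegrable f' := by
  intro x
  by_contra hx
  -- every `∫ z in y..w, f' z` across `x` now takes the junk value `0`
  have hconst : ∀ y w, y < x → x < w → f y = f w := by
    intro y w hy hw
    have hni : ¬ IntervalIntegrable f' volume y w := fun h =>
      hx ⟨Ioo y w, Ioo_mem_nhds hy hw,
        h.def'.mono_set (uIoc_of_le (hy.trans hw).le ▸ Ioo_subset_Ioc_self)⟩
    linarith [hAC y w, intervalIntegral.integral_undef hni]
  have hlim : Tendsto f atTop (𝓝 (f (x - 1))) :=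
    tendsto_const_nhds.congr' <|
      (eventually_gt_atTop x).mono fun w hw => hconst _ _ (by linarith) hw
  have hzero : f (x - 1) = 0 :=
    ((Integrable.of_integral_ne_zero hf).integrableAtFilter atTop).eq_zero_of_tendsto
      (fun _ => volume_eq_top_of_mem_atTop) hlim
  have hae : f =ᵐ[volume] 0 := by
    filter_upwards [volume.ae_ne x] with y hy
    rcases hy.lt_or_gt with hy | hy
    · rw [hconst y (x + 1) hy (by linarith), ← hconst (x - 1) (x + 1) (by linarith) (by linarith),
        hzero, Pi.zero_apply]
    · rw [← hconst (x - 1) y (by linarith) hy, hzero, Pi.zero_apply]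
  exact hf (by simp [integral_congr_ae hae])

lemma eq_const_add_intervalIntegral (hAC : ∀ a b, f b - f a = ∫ z in a..b, f' z) (a : ℝ) :
    f = fun x => f a + ∫ z in a..x, f' z :=
  funext fun x => by linarith [hAC a x]

theorem continuous_of_sub_eq_intervalIntegral
    (hAC : ∀ a b, f b - f a = ∫ z in a..b, f' z) (hloc : LocallyIntegrable f') :
    Continuous f := by
  have hprim := intervalIntegral.continuous_primitive
    (fun a b => (hloc.integrableOn_isCompact isCompact_uIcc).intervalIntegrable) 0
  rw [eq_const_add_intervalIntegral hAC 0]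
  exact hprim.const_add (f 0)

theorem ae_hasDerivAt_of_sub_eq_intervalIntegral
    (hAC : ∀ a b, f b - f a = ∫ z in a..b, f' z) (hloc : LocallyIntegrable f') :
    ∀ᵐ x, HasDerivAt f (f' x) x := by
  filter_upwards [_root_.LocallyIntegrable.ae_hasDerivAt_integral hloc] with x hx
  rw [eq_const_add_intervalIntegral hAC 0]
  exact (hx 0).const_add (f 0)

theorem tendsto_atTop_zero_of_sub_eq_intervalIntegral
    (hAC : ∀ a b, f b - f a = ∫ z in a..b, f' z) (hfI : Integrable f) (hf'I : Integrable f') :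
    Tendsto f atTop (𝓝 0) := by
  have hlim : Tendsto f atTop (𝓝 (f 0 + ∫ z in Ioi 0, f' z)) :=
    (tendsto_const_nhds.add (intervalIntegral_tendsto_integral_Ioi 0 hf'I.integrableOn
      tendsto_id)).congr fun x => by simp only [id]; linarith [hAC 0 x]
  rwa [(hfI.integrableAtFilter atTop).eq_zero_of_tendsto
    (fun _ => volume_eq_top_of_mem_atTop) hlim] at hlim

theorem tendsto_atBot_zero_of_sub_eq_intervalIntegral
    (hAC : ∀ a b, f b - f a = ∫ z in a..b, f' z) (hfI : Integrable f) (hf'I : Integrable f') :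
    Tendsto f atBot (𝓝 0) := by
  have hlim : Tendsto f atBot (𝓝 (f 0 - ∫ z in Iic 0, f' z)) :=
    (tendsto_const_nhds.sub (intervalIntegral_tendsto_integral_Iic 0 hf'I.integrableOn
      tendsto_id)).congr fun x => by simp only [id]; linarith [hAC x 0]
  rwa [(hfI.integrableAtFilter atBot).eq_zero_of_tendsto
    (fun _ => volume_eq_top_of_mem_atBot) hlim] at hlim

theorem integral_eq_zero_of_sub_eq_intervalIntegral
    (hAC : ∀ a b, f b - f a = ∫ z in a..b, f' z) (hfI : Integrable f) (hf'I : Integrable f') :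
    ∫ z, f' z = 0 := by
  have hsub : Tendsto (fun x => f x - f (-x)) atTop (𝓝 0) := by
    simpa using (tendsto_atTop_zero_of_sub_eq_intervalIntegral hAC hfI hf'I).sub
      ((tendsto_atBot_zero_of_sub_eq_intervalIntegral hAC hfI hf'I).comp tendsto_neg_atTop_atBot)
  refine tendsto_nhds_unique
    (intervalIntegral_tendsto_integral hf'I tendsto_neg_atTop_atBot tendsto_id) ?_
  simpa only [id, ← hAC] using hsub

theorem mul_self_sub_eq_intervalIntegral
    (hAC : ∀ a b, f b - f a = ∫ z in a..b, f' z) (hloc : LocallyIntegrable f') (a b : ℝ) :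
    b * f b - a * f a = ∫ z in a..b, f z + z * f' z := by
  have hf : AbsolutelyContinuousOnInterval f a b := by
    have hprim := (hloc.integrableOn_isCompact (isCompact_uIcc (a := a) (b := b)))
      |>.intervalIntegrable.absolutelyContinuousOnInterval_intervalIntegral left_mem_uIcc
    rw [eq_const_add_intervalIntegral hAC a]
    exact (LipschitzWith.const (f a)).lipschitzOnWith.absolutelyContinuousOnInterval.fun_add hprim
  have hid : AbsolutelyContinuousOnInterval id a b :=
    LipschitzWith.id.lipschitzOnWith.absolutelyContinuousOnInterval
  refine (hid.integral_deriv_mul_eq_sub hf).symm.trans (intervalIntegral.integral_congr_ae ?_)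
  filter_upwards [ae_hasDerivAt_of_sub_eq_intervalIntegral hAC hloc] with z hz _
  simp [hz.deriv]

end Primitive

section Score

noncomputable def score (f f' : ℝ → ℝ) (z : ℝ) : ℝ := -f' z / f z

variable {f f' : ℝ → ℝ}

theorem mul_score_ae_eq_neg (hf : ∀ x, 0 ≤ f x)
    (hderiv : ∀ᵐ x, HasDerivAt f (f' x) x) :
    (fun z => f z * score f f' z) =ᵐ[volume] fun z => -f' z := by
  filter_upwards [hderiv] with z hz
  rcases (hf z).eq_or_lt with h0 | hpos
  · -- `f ≥ 0` attains its minimum where it vanishes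
    have hmin : IsLocalMin f z := .of_forall fun y => h0 ▸ hf y
    simp [score, ← h0, hmin.hasDerivAt_eq_zero hz]
  · simp only [score]
    field_simp

theorem integral_mul_score_eq_zero (hf : ∀ x, 0 ≤ f x)
    (hAC : ∀ a b, f b - f a = ∫ z in a..b, f' z) (hloc : LocallyIntegrable f')
    (hfI : Integrable f) (hI : Integrable fun z => f z * score f f' z) :
    ∫ z, f z * score f f' z = 0 := by
  have hscore := mul_score_ae_eq_neg hf
    (ae_hasDerivAt_of_sub_eq_intervalIntegral hAC hloc)
  have hf'I : Integrable f' := by simpa using (hI.congr hscore).neg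
  rw [integral_congr_ae hscore, integral_neg,
    integral_eq_zero_of_sub_eq_intervalIntegral hAC hfI hf'I, neg_zero]

theorem integral_mul_id_mul_score_eq_one (hf : ∀ x, 0 ≤ f x) (hfint : ∫ z, f z = 1)
    (hAC : ∀ a b, f b - f a = ∫ z in a..b, f' z) (hloc : LocallyIntegrable f')
    (hfI : Integrable f) (hzI : Integrable fun z => f z * z)
    (hI : Integrable fun z => f z * (z * score f f' z)) :
    ∫ z, f z * (z * score f f' z) = 1 := by
  have hscore : (fun z => f z * (z * score f f' z)) =ᵐ[volume] fun z => -(z * f' z) := by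
    filter_upwards [mul_score_ae_eq_neg hf
      (ae_hasDerivAt_of_sub_eq_intervalIntegral hAC hloc)] with z hz
    rw [mul_left_comm, hz, mul_neg]
  have hzf'I : Integrable fun z => z * f' z := by simpa using (hI.congr hscore).neg
  have hzf : ∀ a b, b * f b - a * f a = ∫ z in a..b, f z + z * f' z :=
    mul_self_sub_eq_intervalIntegral hAC hloc
  have h0 := integral_eq_zero_of_sub_eq_intervalIntegral hzf
    (hzI.congr (.of_forall fun z => mul_comm _ _)) (hfI.add hzf'I)
  rw [integral_add hfI hzf'I, hfint] at h0
  rw [integral_congr_ae hscore, integral_neg]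
  linarith

end Score

section WithDensity

variable {α : Type*} [MeasurableSpace α] {μ : Measure α} {f : α → ℝ}

theorem integrable_withDensity_ofReal_iff (hfm : Measurable f) (hf : 0 ≤ᵐ[μ] f) {g : α → ℝ} :
    Integrable g (μ.withDensity fun x => ENNReal.ofReal (f x)) ↔
      Integrable (fun x => f x * g x) μ := by
  rw [integrable_withDensity_iff_integrable_smul' hfm.ennreal_ofReal
    (.of_forall fun _ => ENNReal.ofReal_lt_top)]
  refine integrable_congr ?_
  filter_upwards [hf] with x hx
  simp [ENNReal.toReal_ofReal hx]

theorem integral_withDensity_ofReal (hfm : Measurable f) (hf : 0 ≤ᵐ[μ] f) (g : α → ℝ) :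
    ∫ x, g x ∂μ.withDensity (fun x => ENNReal.ofReal (f x)) = ∫ x, f x * g x ∂μ := by
  rw [integral_withDensity_eq_integral_toReal_smul hfm.ennreal_ofReal
    (.of_forall fun _ => ENNReal.ofReal_lt_top)]
  refine integral_congr_ae ?_
  filter_upwards [hf] with x hx
  simp [ENNReal.toReal_ofReal hx]

theorem isProbabilityMeasure_withDensity_ofReal (hfI : Integrable f μ) (hf : 0 ≤ᵐ[μ] f)
    (hf1 : ∫ x, f x ∂μ = 1) :
    IsProbabilityMeasure (μ.withDensity fun x => ENNReal.ofReal (f x)) := by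
  constructor
  rw [withDensity_apply _ MeasurableSet.univ, Measure.restrict_univ,
    ← ofReal_integral_eq_lintegral_ofReal hfI hf, hf1, ENNReal.ofReal_one]

end WithDensity

theorem MeasureTheory.L2.inner_toLp_eq_integral_mul {α : Type*} [MeasurableSpace α]
    {μ : Measure α} {g : α → ℝ} (hg : MemLp g 2 μ) (s : Lp ℝ 2 μ) :
    inner ℝ (hg.toLp g) s = ∫ x, g x * s x ∂μ := by
  rw [L2.inner_def]
  refine integral_congr_ae ?_
  filter_upwards [hg.coeFn_toLp] with x hx
  simp [hx, mul_comm]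

theorem memLp_id_two_of_integral_sq_ne_zero {μ : Measure ℝ} (h : ∫ z, z ^ 2 ∂μ ≠ 0) :
    MemLp (fun z : ℝ => z) 2 μ :=
  (memLp_two_iff_integrable_sq aestronglyMeasurable_id).2 (.of_integral_ne_zero h)

theorem exists_orthogonal_projection_sub_id_div_variance {μ : Measure ℝ} [IsFiniteMeasure μ]
    {ℓ : ℝ → ℝ} (ℓL : Lp ℝ 2 μ) (hℓL : ℓL =ᵐ[μ] ℓ) (hmean : ∫ z, z ∂μ = 0)
    {σ2 : ℝ} (hσ2 : σ2 = ∫ z, z ^ 2 ∂μ) (hσ : σ2 ≠ 0)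
    (hℓ : ∫ z, ℓ z ∂μ = 0) (hzℓ : ∫ z, z * ℓ z ∂μ = 1) :
    ∃ ℓ₀ : Lp ℝ 2 μ,
      (ℓ₀ =ᵐ[μ] fun z => ℓ z - z / σ2) ∧
        ((∫ z, ℓ₀ z ∂μ = 0) ∧ (∫ z, z * ℓ₀ z ∂μ = 0)) ∧
        ∀ s : Lp ℝ 2 μ,
          ((∫ z, s z ∂μ = 0) ∧ (∫ z, z * s z ∂μ = 0)) →
            (inner ℝ (ℓL - ℓ₀) s : ℝ) = 0 := by
  have hz2I : Integrable (fun z : ℝ => z ^ 2) μ := .of_integral_ne_zero (hσ2 ▸ hσ)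
  have hz := memLp_id_two_of_integral_sq_ne_zero (hσ2 ▸ hσ)
  have hℓ2 : MemLp ℓ 2 μ := (Lp.memLp ℓL).ae_eq hℓL
  have hℓ₀ : ⇑(ℓL - σ2⁻¹ • hz.toLp _) =ᵐ[μ] fun z => ℓ z - z / σ2 := by
    filter_upwards [Lp.coeFn_sub ℓL (σ2⁻¹ • hz.toLp _), Lp.coeFn_smul σ2⁻¹ (hz.toLp _),
      hz.coeFn_toLp, hℓL] with z hsub hsmul hid hℓz
    rw [hsub, Pi.sub_apply, hsmul, Pi.smul_apply, hid, hℓz, smul_eq_mul, div_eq_inv_mul]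
  refine ⟨ℓL - σ2⁻¹ • hz.toLp _, hℓ₀, ⟨?_, ?_⟩, fun s ⟨_, hs⟩ => ?_⟩
  · rw [integral_congr_ae hℓ₀, integral_sub (hℓ2.integrable one_le_two)
      ((hz.integrable one_le_two).div_const σ2), integral_div, hℓ]
    simp [hmean]
  · have hmul : (fun z => z * (ℓL - σ2⁻¹ • hz.toLp _) z) =ᵐ[μ]
        fun z => z * ℓ z - z ^ 2 / σ2 := by
      filter_upwards [hℓ₀] with z h
      rw [h]
      ring
    rw [integral_congr_ae hmul,
      integral_sub (f := fun z => z * ℓ z) (hz.integrable_mul hℓ2) (hz2I.div_const σ2), integral_div,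
      hzℓ, ← hσ2, div_self hσ, sub_self]
  · rw [sub_sub_cancel, real_inner_smul_left, L2.inner_toLp_eq_integral_mul, hs, mul_zero]

theorem projection_of_score_onto_S_general
    (f f' : ℝ → ℝ)
    (hfpos : ∀ z, 0 ≤ f z) (hfint : ∫ z, f z = 1)
    (hAC : ∀ a b : ℝ, f b - f a = ∫ z in a..b, f' z)
    (F : Measure ℝ)
    (hF : F = (volume : Measure ℝ).withDensity fun z => ENNReal.ofReal (f z))
    (ℓ : ℝ → ℝ) (hℓ : ℓ = fun z => -f' z / f z)
    (hmean : ∫ z, z ∂F = 0)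
    (σ2 : ℝ) (hσ2 : σ2 = ∫ z, z ^ 2 ∂F) (hσpos : 0 < σ2)
    (ℓL : Lp ℝ 2 F) (hℓL : ℓL =ᵐ[F] ℓ) :
    ∃ ℓ₀ : Lp ℝ 2 F,
      (ℓ₀ =ᵐ[F] fun z => ℓ z - z / σ2) ∧
        ((∫ z, ℓ₀ z ∂F = 0) ∧ (∫ z, z * ℓ₀ z ∂F = 0)) ∧
        ∀ s : Lp ℝ 2 F,
          ((∫ z, s z ∂F = 0) ∧ (∫ z, z * s z ∂F = 0)) →
            (inner ℝ (ℓL - ℓ₀) s : ℝ) = 0 := by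
  subst hF hℓ
  have hfI : Integrable f := .of_integral_ne_zero (by simp [hfint])
  have hloc := locallyIntegrable_of_sub_eq_intervalIntegral hAC (by simp [hfint])
  have hfm := (continuous_of_sub_eq_intervalIntegral hAC hloc).measurable
  have hf0 : 0 ≤ᵐ[volume] f := .of_forall hfpos
  have := isProbabilityMeasure_withDensity_ofReal hfI hf0 hfint
  have hℓ2 := (Lp.memLp ℓL).ae_eq hℓL
  have hz2 := memLp_id_two_of_integral_sq_ne_zero (hσ2 ▸ hσpos.ne')
  refine exists_orthogonal_projection_sub_id_div_variance ℓL hℓL hmean hσ2 hσpos.ne' ?_ ?_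
  · rw [integral_withDensity_ofReal hfm hf0]
    exact integral_mul_score_eq_zero hfpos hAC hloc hfI
      ((integrable_withDensity_ofReal_iff hfm hf0).1 (hℓ2.integrable one_le_two))
  · rw [integral_withDensity_ofReal hfm hf0]
    exact integral_mul_id_mul_score_eq_one hfpos hfint hAC hloc hfI
      ((integrable_withDensity_ofReal_iff hfm hf0).1 (hz2.integrable one_le_two))
      ((integrable_withDensity_ofReal_iff hfm hf0).1 (hz2.integrable_mul hℓ2))

/-- Under Assumption F (density `f` absolutely continuous with a.e.
derivative `f'`, score `ℓ = -f'/f`, finite Fisher information), if the distribution `F`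
with density `f` has mean zero and variance `σ² ∈ (0, ∞)`, then the orthogonal projection
of the score function `ℓ` onto the subspace
`S = {s ∈ L²(F) : ∫ s dF = 0, ∫ z s(z) dF = 0}` is `ℓ₀(z) = ℓ(z) - z/σ²`. -/
theorem projection_of_score_onto_S
    (f f' : ℝ → ℝ) (hf'm : Measurable f')
    (hfpos : ∀ z, 0 ≤ f z) (hfint : ∫ z, f z = 1)
    (hAC : ∀ a b : ℝ, f b - f a = ∫ z in a..b, f' z)
    (F : Measure ℝ)
    (hF : F = (volume : Measure ℝ).withDensity fun z => ENNReal.ofReal (f z))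
    (ℓ : ℝ → ℝ) (hℓ : ℓ = fun z => -f' z / f z)
    (hJ : Integrable fun z => ℓ z ^ 2 * f z)
    (hmean : ∫ z, z ∂F = 0)
    (σ2 : ℝ) (hσ2 : σ2 = ∫ z, z ^ 2 ∂F) (hσpos : 0 < σ2)
    (ℓL : Lp ℝ 2 F) (hℓL : ℓL =ᵐ[F] ℓ) :
    ∃ ℓ₀ : Lp ℝ 2 F,
      (ℓ₀ =ᵐ[F] fun z => ℓ z - z / σ2) ∧
        ((∫ z, ℓ₀ z ∂F = 0) ∧ (∫ z, z * ℓ₀ z ∂F = 0)) ∧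
        ∀ s : Lp ℝ 2 F,
          ((∫ z, s z ∂F = 0) ∧ (∫ z, z * s z ∂F = 0)) →
            (inner ℝ (ℓL - ℓ₀) s : ℝ) = 0 :=
  projection_of_score_onto_S_general f f' hfpos hfint hAC F hF ℓ hℓ hmean σ2 hσ2 hσpos ℓL hℓL
end

section
/- Let (X, Y, δ) be random elements with δ taking values in {0,1} and E[δ | X, Y] = π(X) for a measurable function π of X alone. Let u be a square-integrable function of X with E[u(X)] = 0, let v be a square-integrable function of (X, Y) with E[v(X, Y) | X] = 0 almost surely, and let w be a square-integrable function of X. Then the three random variables u(X), δ v(X, Y) and {δ − π(X)} w(X) are pairwise orthogonal in L²: E[u(X) · δ v(X, Y)] = 0, E[u(X){δ − π(X)} w(X)] = 0 and E[δ v(X, Y){δ − π(X)} w(X)] = 0. Moreover E[{δ − π(X)}² w(X)²] = E[π(X){1 − π(X)} w(X)²]. -/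
/-!
Conditioning on `(X, Y)` shows that `δ - π(X)` is orthogonal to every integrable function of
`(X, Y)`, and conditioning on `X` that `v(X, Y)` is orthogonal to every square-integrable function
of `X`. Using `δ² = δ`, the first and third integrands are `φ(X, Y) δ` where `φ(X, Y)` is `v(X, Y)`
times a function of `X`, so replacing `δ` by `π(X)` leaves a function of `X` times `v(X, Y)`; the
second is a function of `X` times `δ - π(X)`; and `(δ - π)² = (1 - 2π)(δ - π) + π(1 - π)` gives the
last identity. All products are integrable since `|δ| ≤ 1` and, `π(X)` being a conditional
expectation of `δ`, also `|π(X)| ≤ 1`.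
-/

open MeasureTheory ProbabilityTheory
open scoped ENNReal

section PullOut

variable {Ω γ : Type*} {m m₀ : MeasurableSpace Ω} {μ : Measure Ω} [IsFiniteMeasure μ]

theorem integral_mul_eq_integral_mul_of_condExp_ae_eq {f g h : Ω → ℝ} (hm : m ≤ m₀)
    (hf : StronglyMeasurable[m] f) (hg : Integrable g μ)
    (hfg : Integrable (fun ω => f ω * g ω) μ) (hgh : μ[g|m] =ᵐ[μ] h) :
    ∫ ω, f ω * g ω ∂μ = ∫ ω, f ω * h ω ∂μ := by
  rw [← integral_condExp hm]
  refine integral_congr_ae ?_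
  filter_upwards [condExp_mul_of_stronglyMeasurable_left hf hfg hg, hgh] with ω hpull hω
  exact hpull.trans (congrArg (f ω * ·) hω)

theorem integral_comp_mul_eq_integral_comp_mul_of_condExp_comap_ae_eq [MeasurableSpace γ]
    {Z : Ω → γ} {φ : γ → ℝ} {g h : Ω → ℝ} (hZ : Measurable Z) (hφ : Measurable φ)
    (hg : Integrable g μ) (hφg : Integrable (fun ω => φ (Z ω) * g ω) μ)
    (hgh : μ[g|MeasurableSpace.comap Z inferInstance] =ᵐ[μ] h) :
    ∫ ω, φ (Z ω) * g ω ∂μ = ∫ ω, φ (Z ω) * h ω ∂μ :=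
  integral_mul_eq_integral_mul_of_condExp_ae_eq hZ.comap_le
    (hφ.comp (comap_measurable Z)).stronglyMeasurable hg hφg hgh

theorem integral_comp_mul_eq_zero_of_condExp_comap_eq_zero [MeasurableSpace γ]
    {Z : Ω → γ} {ψ : γ → ℝ} {g : Ω → ℝ} (hZ : Measurable Z) (hψ : Measurable ψ)
    (hψL2 : MemLp (fun ω => ψ (Z ω)) 2 μ) (hgL2 : MemLp g 2 μ)
    (hg0 : μ[g|MeasurableSpace.comap Z inferInstance] =ᵐ[μ] fun _ => 0) :
    ∫ ω, ψ (Z ω) * g ω ∂μ = 0 := by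
  rw [integral_comp_mul_eq_integral_comp_mul_of_condExp_comap_ae_eq hZ hψ
    (hgL2.integrable one_le_two) (hψL2.integrable_mul hgL2) hg0]
  simp

end PullOut

structure MissingAtRandom {Ω α β : Type*} [MeasurableSpace Ω] [MeasurableSpace α]
    [MeasurableSpace β] (μ : Measure Ω) (X : Ω → α) (Y : Ω → β) (δ : Ω → ℝ) (π : α → ℝ) :
    Prop where
  measurable_X : Measurable X
  measurable_Y : Measurable Y
  measurable_δ : Measurable δ
  measurable_π : Measurable π
  eq_zero_or_eq_one : ∀ ω, δ ω = 0 ∨ δ ω = 1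
  condExp_eq : μ[δ|MeasurableSpace.comap (fun ω => (X ω, Y ω)) inferInstance]
    =ᵐ[μ] fun ω => π (X ω)

namespace MissingAtRandom

variable {Ω α β : Type*} [MeasurableSpace Ω] [MeasurableSpace α] [MeasurableSpace β]
  {μ : Measure Ω} {X : Ω → α} {Y : Ω → β} {δ : Ω → ℝ} {π : α → ℝ}

theorem abs_response_le_one (h : MissingAtRandom μ X Y δ π) (ω : Ω) : |δ ω| ≤ 1 := by
  rcases h.eq_zero_or_eq_one ω with hω | hω <;> simp [hω]

theorem memLp_top_response (h : MissingAtRandom μ X Y δ π) : MemLp δ ∞ μ :=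
  memLp_top_of_bound h.measurable_δ.aestronglyMeasurable 1 (ae_of_all _ h.abs_response_le_one)

theorem memLp_top_propensity (h : MissingAtRandom μ X Y δ π) :
    MemLp (fun ω => π (X ω)) ∞ μ := by
  have hbdd := ae_bdd_abs_condExp_of_ae_bdd_abs (R := (1 : ℝ))
    (m := MeasurableSpace.comap (fun ω => (X ω, Y ω)) inferInstance) (μ := μ)
    (ae_of_all _ h.abs_response_le_one)
  refine memLp_top_of_bound (h.measurable_π.comp h.measurable_X).aestronglyMeasurable 1 ?_
  filter_upwards [hbdd, h.condExp_eq] with ω hω hπω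
  simpa [hπω] using hω

theorem memLp_top_propensity_mul_one_sub (h : MissingAtRandom μ X Y δ π) :
    MemLp (fun ω => π (X ω) * (1 - π (X ω))) ∞ μ :=
  ((memLp_top_const 1).sub h.memLp_top_propensity).mul' h.memLp_top_propensity

theorem integral_mul_response [IsFiniteMeasure μ] (h : MissingAtRandom μ X Y δ π)
    {φ : α × β → ℝ} (hφ : Measurable φ) (hφi : Integrable (fun ω => φ (X ω, Y ω)) μ) :
    ∫ ω, φ (X ω, Y ω) * δ ω ∂μ = ∫ ω, φ (X ω, Y ω) * π (X ω) ∂μ :=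
  integral_comp_mul_eq_integral_comp_mul_of_condExp_comap_ae_eq
    (h.measurable_X.prodMk h.measurable_Y) hφ (h.memLp_top_response.integrable le_top)
    (hφi.mul_of_top_left h.memLp_top_response) h.condExp_eq

theorem integral_mul_residual [IsFiniteMeasure μ] (h : MissingAtRandom μ X Y δ π)
    {φ : α × β → ℝ} (hφ : Measurable φ) (hφi : Integrable (fun ω => φ (X ω, Y ω)) μ) :
    ∫ ω, φ (X ω, Y ω) * (δ ω - π (X ω)) ∂μ = 0 := by
  have hφδ : Integrable (fun ω => φ (X ω, Y ω) * δ ω) μ :=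
    hφi.mul_of_top_left h.memLp_top_response
  have hφπ : Integrable (fun ω => φ (X ω, Y ω) * π (X ω)) μ :=
    hφi.mul_of_top_left h.memLp_top_propensity
  simp only [mul_sub]
  rw [integral_sub hφδ hφπ, h.integral_mul_response hφ hφi, sub_self]

theorem integral_mul_response_mul_eq_zero [IsFiniteMeasure μ]
    (h : MissingAtRandom μ X Y δ π)
    {u : α → ℝ} {v : α × β → ℝ} (hu : Measurable u) (huL2 : MemLp (fun ω => u (X ω)) 2 μ)
    (hv : Measurable v) (hvL2 : MemLp (fun ω => v (X ω, Y ω)) 2 μ)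
    (hv0 : μ[fun ω => v (X ω, Y ω)|MeasurableSpace.comap X inferInstance] =ᵐ[μ] fun _ => 0) :
    ∫ ω, u (X ω) * (δ ω * v (X ω, Y ω)) ∂μ = 0 := by
  have hπ := h.measurable_π
  calc ∫ ω, u (X ω) * (δ ω * v (X ω, Y ω)) ∂μ
      = ∫ ω, u (X ω) * v (X ω, Y ω) * δ ω ∂μ := by congr 1; funext ω; ring
    _ = ∫ ω, u (X ω) * v (X ω, Y ω) * π (X ω) ∂μ :=
      h.integral_mul_response (φ := fun p => u p.1 * v p) (by fun_prop)
        (huL2.integrable_mul hvL2)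
    _ = ∫ ω, π (X ω) * u (X ω) * v (X ω, Y ω) ∂μ := by congr 1; funext ω; ring
    _ = 0 := integral_comp_mul_eq_zero_of_condExp_comap_eq_zero (ψ := fun a => π a * u a)
      h.measurable_X (by fun_prop) (huL2.mul' h.memLp_top_propensity) hvL2 hv0

theorem integral_mul_residual_mul_eq_zero [IsFiniteMeasure μ]
    (h : MissingAtRandom μ X Y δ π)
    {u w : α → ℝ} (hu : Measurable u) (huL2 : MemLp (fun ω => u (X ω)) 2 μ)
    (hw : Measurable w) (hwL2 : MemLp (fun ω => w (X ω)) 2 μ) :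
    ∫ ω, u (X ω) * ((δ ω - π (X ω)) * w (X ω)) ∂μ = 0 := by
  calc ∫ ω, u (X ω) * ((δ ω - π (X ω)) * w (X ω)) ∂μ
      = ∫ ω, u (X ω) * w (X ω) * (δ ω - π (X ω)) ∂μ := by congr 1; funext ω; ring
    _ = 0 := h.integral_mul_residual (φ := fun p => u p.1 * w p.1) (by fun_prop)
      (huL2.integrable_mul hwL2)

theorem integral_response_mul_mul_residual_mul_eq_zero [IsFiniteMeasure μ]
    (h : MissingAtRandom μ X Y δ π) {v : α × β → ℝ} {w : α → ℝ} (hv : Measurable v)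
    (hvL2 : MemLp (fun ω => v (X ω, Y ω)) 2 μ)
    (hv0 : μ[fun ω => v (X ω, Y ω)|MeasurableSpace.comap X inferInstance] =ᵐ[μ] fun _ => 0)
    (hw : Measurable w) (hwL2 : MemLp (fun ω => w (X ω)) 2 μ) :
    ∫ ω, δ ω * v (X ω, Y ω) * ((δ ω - π (X ω)) * w (X ω)) ∂μ = 0 := by
  have hπ := h.measurable_π
  calc ∫ ω, δ ω * v (X ω, Y ω) * ((δ ω - π (X ω)) * w (X ω)) ∂μ
      = ∫ ω, v (X ω, Y ω) * w (X ω) * (1 - π (X ω)) * δ ω ∂μ := by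
        congr 1; funext ω
        rcases h.eq_zero_or_eq_one ω with hω | hω <;> rw [hω] <;> ring
    _ = ∫ ω, v (X ω, Y ω) * w (X ω) * (1 - π (X ω)) * π (X ω) ∂μ :=
      h.integral_mul_response (φ := fun p => v p * w p.1 * (1 - π p.1)) (by fun_prop)
        ((hvL2.integrable_mul hwL2).mul_of_top_left
          ((memLp_top_const 1).sub h.memLp_top_propensity))
    _ = ∫ ω, π (X ω) * (1 - π (X ω)) * w (X ω) * v (X ω, Y ω) ∂μ := by
        congr 1; funext ω; ring
    _ = 0 := integral_comp_mul_eq_zero_of_condExp_comap_eq_zero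
      (ψ := fun a => π a * (1 - π a) * w a) h.measurable_X (by fun_prop)
      (hwL2.mul' h.memLp_top_propensity_mul_one_sub) hvL2 hv0

theorem integral_residual_sq_mul_sq [IsFiniteMeasure μ] (h : MissingAtRandom μ X Y δ π)
    {w : α → ℝ} (hw : Measurable w) (hwL2 : MemLp (fun ω => w (X ω)) 2 μ) :
    ∫ ω, (δ ω - π (X ω)) ^ 2 * w (X ω) ^ 2 ∂μ
      = ∫ ω, π (X ω) * (1 - π (X ω)) * w (X ω) ^ 2 ∂μ := by
  have hπ := h.measurable_π
  have hπ' := h.memLp_top_propensity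
  have hw2 := hwL2.integrable_sq
  have hφ : Integrable (fun ω => (1 - 2 * π (X ω)) * w (X ω) ^ 2) μ :=
    hw2.mul_of_top_right ((memLp_top_const 1).sub (hπ'.const_mul 2))
  have hφε : Integrable (fun ω => (1 - 2 * π (X ω)) * w (X ω) ^ 2 * (δ ω - π (X ω))) μ :=
    hφ.mul_of_top_left (h.memLp_top_response.sub hπ')
  have hvar : Integrable (fun ω => π (X ω) * (1 - π (X ω)) * w (X ω) ^ 2) μ :=
    hw2.mul_of_top_right h.memLp_top_propensity_mul_one_sub
  calc ∫ ω, (δ ω - π (X ω)) ^ 2 * w (X ω) ^ 2 ∂μ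
      = ∫ ω, ((1 - 2 * π (X ω)) * w (X ω) ^ 2 * (δ ω - π (X ω))
          + π (X ω) * (1 - π (X ω)) * w (X ω) ^ 2) ∂μ := by
        congr 1; funext ω
        rcases h.eq_zero_or_eq_one ω with hω | hω <;> rw [hω] <;> ring
    _ = ∫ ω, π (X ω) * (1 - π (X ω)) * w (X ω) ^ 2 ∂μ := by
        rw [integral_add hφε hvar,
          h.integral_mul_residual (φ := fun p => (1 - 2 * π p.1) * w p.1 ^ 2) (by fun_prop) hφ,
          zero_add]

end MissingAtRandom

theorem tangent_space_orthogonality_general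
    {Ω α β : Type*} [MeasurableSpace Ω] [MeasurableSpace α] [MeasurableSpace β]
    (μ : Measure Ω) [IsProbabilityMeasure μ]
    (X : Ω → α) (Y : Ω → β) (δ : Ω → ℝ) (π : α → ℝ)
    (hX : Measurable X) (hY : Measurable Y) (hδ : Measurable δ) (hπ : Measurable π)
    (hδ01 : ∀ ω, δ ω = 0 ∨ δ ω = 1)
    (hMAR : MeasureTheory.condExp
        (MeasurableSpace.comap (fun ω => (X ω, Y ω)) inferInstance) μ δ
        =ᵐ[μ] fun ω => π (X ω))
    (u : α → ℝ) (hu : Measurable u)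
    (huL2 : MemLp (fun ω => u (X ω)) 2 μ)
    (v : α × β → ℝ) (hv : Measurable v)
    (hvL2 : MemLp (fun ω => v (X ω, Y ω)) 2 μ)
    (hv0 : MeasureTheory.condExp (MeasurableSpace.comap X inferInstance) μ
        (fun ω => v (X ω, Y ω)) =ᵐ[μ] fun _ => (0 : ℝ))
    (w : α → ℝ) (hw : Measurable w)
    (hwL2 : MemLp (fun ω => w (X ω)) 2 μ) :
    (∫ ω, u (X ω) * (δ ω * v (X ω, Y ω)) ∂μ = 0) ∧
      (∫ ω, u (X ω) * ((δ ω - π (X ω)) * w (X ω)) ∂μ = 0) ∧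
      (∫ ω, δ ω * v (X ω, Y ω) * ((δ ω - π (X ω)) * w (X ω)) ∂μ = 0) ∧
      (∫ ω, (δ ω - π (X ω)) ^ 2 * w (X ω) ^ 2 ∂μ
        = ∫ ω, π (X ω) * (1 - π (X ω)) * w (X ω) ^ 2 ∂μ) := by
  have h : MissingAtRandom μ X Y δ π := ⟨hX, hY, hδ, hπ, hδ01, hMAR⟩
  exact ⟨h.integral_mul_response_mul_eq_zero hu huL2 hv hvL2 hv0,
    h.integral_mul_residual_mul_eq_zero hu huL2 hw hwL2,
    h.integral_response_mul_mul_residual_mul_eq_zero hv hvL2 hv0 hw hwL2,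
    h.integral_residual_sq_mul_sq hw hwL2⟩

/-- In the MAR model (`δ ∈ {0,1}`, `E[δ | X, Y] = π(X)`), for `u` square
integrable with `E[u(X)] = 0`, `v` square integrable with `E[v(X,Y) | X] = 0` a.s., and `w`
square integrable, the random variables `u(X)`, `δ v(X,Y)` and `(δ - π(X)) w(X)` are
pairwise orthogonal in `L²`, and `E[(δ - π(X))² w(X)²] = E[π(X)(1 - π(X)) w(X)²]`. -/
theorem tangent_space_orthogonality
    {Ω α β : Type*} [MeasurableSpace Ω] [MeasurableSpace α] [MeasurableSpace β]
    (μ : Measure Ω) [IsProbabilityMeasure μ]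
    (X : Ω → α) (Y : Ω → β) (δ : Ω → ℝ) (π : α → ℝ)
    (hX : Measurable X) (hY : Measurable Y) (hδ : Measurable δ) (hπ : Measurable π)
    (hδ01 : ∀ ω, δ ω = 0 ∨ δ ω = 1)
    (hMAR : MeasureTheory.condExp
        (MeasurableSpace.comap (fun ω => (X ω, Y ω)) inferInstance) μ δ
        =ᵐ[μ] fun ω => π (X ω))
    (u : α → ℝ) (hu : Measurable u)
    (huL2 : MemLp (fun ω => u (X ω)) 2 μ)
    (hu0 : ∫ ω, u (X ω) ∂μ = 0)
    (v : α × β → ℝ) (hv : Measurable v)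
    (hvL2 : MemLp (fun ω => v (X ω, Y ω)) 2 μ)
    (hv0 : MeasureTheory.condExp (MeasurableSpace.comap X inferInstance) μ
        (fun ω => v (X ω, Y ω)) =ᵐ[μ] fun _ => (0 : ℝ))
    (w : α → ℝ) (hw : Measurable w)
    (hwL2 : MemLp (fun ω => w (X ω)) 2 μ) :
    (∫ ω, u (X ω) * (δ ω * v (X ω, Y ω)) ∂μ = 0) ∧
      (∫ ω, u (X ω) * ((δ ω - π (X ω)) * w (X ω)) ∂μ = 0) ∧
      (∫ ω, δ ω * v (X ω, Y ω) * ((δ ω - π (X ω)) * w (X ω)) ∂μ = 0) ∧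
      (∫ ω, (δ ω - π (X ω)) ^ 2 * w (X ω) ^ 2 ∂μ
        = ∫ ω, π (X ω) * (1 - π (X ω)) * w (X ω) ^ 2 ∂μ) :=
  tangent_space_orthogonality_general μ X Y δ π hX hY hδ hπ hδ01 hMAR u hu huL2 v hv hvL2 hv0 w hw
    hwL2
end

section
/- Let F be a probability distribution on ℝ with density f, mean zero and variance σ² ∈ (0, ∞), whose score function ℓ = −f′/f satisfies E[ℓ(ε)] = 0, E[ε ℓ(ε)] = 1 and E[ℓ(ε)²] < ∞, where ε has distribution F. For h ∈ L²(F) set h₀(z) = h(z) − E[h(ε)] − (z/σ²)E[ε h(ε)] and ℓ₀(z) = ℓ(z) − z/σ². Then E[h₀(ε)ℓ₀(ε)] = E[ℓ(ε)h(ε)] − E[ε h(ε)]/σ², and for every z ∈ ℝ: h₀(z) + σ² E[h₀(ε)ℓ₀(ε)]·{ℓ₀(z) − ℓ(z)} = h(z) − E[h(ε)] − E[ℓ(ε)h(ε)]·z. Consequently, when s*(z) = (E[δ])^{-1}{h₀(z) + σ²E[h₀(ε)ℓ₀(ε)]ℓ₀(z)} and t* = −(σ²/E[δ])E[h₀(ε)ℓ₀(ε)],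 the canonical gradient δ{s*(ε) + ℓ(ε)t*} simplifies to (δ/E[δ]){h(ε) − E[h(ε)] − E[ℓ(ε)h(ε)]·ε}. -/
open MeasureTheory ProbabilityTheory

lemma memL2_mul_integrable {F : Measure ℝ} [IsProbabilityMeasure F] {f g : ℝ → ℝ}
    (hf : MemLp f 2 F) (hg : MemLp g 2 F) :
    Integrable (fun u => f u * g u) F := by
  have h := hg.smul (φ := f) hf (p := 2) (q := 2) (r := 1)
    (hpqr := ⟨by rw [inv_one]; exact ENNReal.inv_two_add_inv_two⟩)
  rw [← memLp_one_iff_integrable]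
  exact h


/-- Let `F` have density `f`, mean zero and variance `σ² ∈ (0, ∞)`, with
score `ℓ = -f'/f` satisfying `E[ℓ(ε)] = 0`, `E[ε ℓ(ε)] = 1` and `E[ℓ(ε)²] < ∞`.  For
`h ∈ L²(F)` set `h₀(z) = h(z) - E[h] - (z/σ²)E[ε h(ε)]` and `ℓ₀(z) = ℓ(z) - z/σ²`.  Then
`E[h₀ ℓ₀] = E[ℓ h] - E[ε h]/σ²`, for every `z`
`h₀(z) + σ² E[h₀ ℓ₀] (ℓ₀(z) - ℓ(z)) = h(z) - E[h] - E[ℓ h] z`, and consequently the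
canonical gradient simplifies:
`d (s*(z) + ℓ(z) t*) = (d/p)(h(z) - E[h] - E[ℓ h] z)` for
`s*(z) = p⁻¹ (h₀(z) + σ² E[h₀ ℓ₀] ℓ₀(z))` and `t* = -(σ²/p) E[h₀ ℓ₀]`. -/
theorem canonical_gradient_simplification
    (F : Measure ℝ) [IsProbabilityMeasure F]
    (hmean : ∫ z, z ∂F = 0)
    (σ2 : ℝ) (hσ2 : σ2 = ∫ z, z ^ 2 ∂F) (hσpos : 0 < σ2)
    (f f' : ℝ → ℝ)
    (hdens : F = (volume : Measure ℝ).withDensity fun z => ENNReal.ofReal (f z))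
    (ℓ : ℝ → ℝ) (hℓdef : ℓ = fun z => -f' z / f z)
    (hℓ0 : ∫ z, ℓ z ∂F = 0) (hℓ1 : ∫ z, z * ℓ z ∂F = 1)
    (hℓ2 : MemLp ℓ 2 F)
    (h : ℝ → ℝ) (hh : MemLp h 2 F)
    (h₀ ℓ₀ : ℝ → ℝ)
    (hh₀ : h₀ = fun z => h z - (∫ u, h u ∂F) - (z / σ2) * ∫ u, u * h u ∂F)
    (hℓ₀ : ℓ₀ = fun z => ℓ z - z / σ2)
    (p : ℝ) (hp : 0 < p)
    (s' : ℝ → ℝ) (t' : ℝ)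
    (hs' : s' = fun z => p⁻¹ * (h₀ z + σ2 * (∫ u, h₀ u * ℓ₀ u ∂F) * ℓ₀ z))
    (ht' : t' = -(σ2 / p) * ∫ u, h₀ u * ℓ₀ u ∂F) :
    (∫ u, h₀ u * ℓ₀ u ∂F = (∫ u, ℓ u * h u ∂F) - (∫ u, u * h u ∂F) / σ2) ∧
      (∀ z : ℝ, h₀ z + σ2 * (∫ u, h₀ u * ℓ₀ u ∂F) * (ℓ₀ z - ℓ z)
          = h z - (∫ u, h u ∂F) - (∫ u, ℓ u * h u ∂F) * z) ∧
      (∀ d z : ℝ, d * (s' z + ℓ z * t')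
          = d / p * (h z - (∫ u, h u ∂F) - (∫ u, ℓ u * h u ∂F) * z)) := by
  have hσ0 : σ2 ≠ 0 := ne_of_gt hσpos
  -- identity function is in L²
  have hsq : Integrable (fun z : ℝ => z ^ 2) F := by
    by_contra hc
    rw [integral_undef hc] at hσ2
    exact hσ0 hσ2
  have hid : MemLp (fun z : ℝ => z) 2 F :=
    (memLp_two_iff_integrable_sq measurable_id.aestronglyMeasurable).2 hsq
  set A := ∫ u, h u ∂F with hA
  set B := ∫ u, u * h u ∂F with hB
  -- integrability of all products
  have ilh : Integrable (fun u => ℓ u * h u) F := memL2_mul_integrable hℓ2 hh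
  have iuh : Integrable (fun u => u * h u) F := memL2_mul_integrable hid hh
  have iul : Integrable (fun u => u * ℓ u) F := memL2_mul_integrable hid hℓ2
  have il : Integrable ℓ F := hℓ2.integrable one_le_two
  have iid : Integrable (fun u : ℝ => u) F := hid.integrable one_le_two
  -- expand the integrand
  have key : (fun u => h₀ u * ℓ₀ u)
      = fun u => ((((ℓ u * h u - (1 / σ2) * (u * h u)) - A * ℓ u) + (A / σ2) * u)
          - (B / σ2) * (u * ℓ u)) + (B / σ2 ^ 2) * u ^ 2 := by
    funext u
    simp only [hh₀, hℓ₀]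
    field_simp
    ring
  have I1 : Integrable (fun u => ℓ u * h u - (1 / σ2) * (u * h u)) F :=
    ilh.sub (iuh.const_mul _)
  have I2 : Integrable (fun u => (ℓ u * h u - (1 / σ2) * (u * h u)) - A * ℓ u) F :=
    I1.sub (il.const_mul _)
  have I3 : Integrable (fun u => ((ℓ u * h u - (1 / σ2) * (u * h u)) - A * ℓ u) + (A / σ2) * u) F :=
    I2.add (iid.const_mul _)
  have I4 : Integrable (fun u => (((ℓ u * h u - (1 / σ2) * (u * h u)) - A * ℓ u) + (A / σ2) * u)
      - (B / σ2) * (u * ℓ u)) F := I3.sub (iul.const_mul _)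
  have hint : ∫ u, h₀ u * ℓ₀ u ∂F = (∫ u, ℓ u * h u ∂F) - B / σ2 := by
    rw [key, integral_add I4 (hsq.const_mul _), integral_sub I3 (iul.const_mul _),
      integral_add I2 (iid.const_mul _), integral_sub I1 (il.const_mul _),
      integral_sub ilh (iuh.const_mul _), integral_const_mul, integral_const_mul,
      integral_const_mul, integral_const_mul, integral_const_mul, hℓ0, hℓ1, hmean, ← hσ2, ← hB]
    field_simp
    ring
  refine ⟨hint, ?_, ?_⟩
  · intro z
    rw [hint, hh₀, hℓ₀]
    field_simp
    ring
  · intro d z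
    have h2 : h₀ z + σ2 * (∫ u, h₀ u * ℓ₀ u ∂F) * (ℓ₀ z - ℓ z)
        = h z - A - (∫ u, ℓ u * h u ∂F) * z := by
      rw [hint, hh₀, hℓ₀]
      field_simp
      ring
    rw [hs', ht']
    have : d * (p⁻¹ * (h₀ z + σ2 * (∫ u, h₀ u * ℓ₀ u ∂F) * ℓ₀ z)
        + ℓ z * (-(σ2 / p) * ∫ u, h₀ u * ℓ₀ u ∂F))
        = d / p * (h₀ z + σ2 * (∫ u, h₀ u * ℓ₀ u ∂F) * (ℓ₀ z - ℓ z)) := by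
      ring
    rw [this, h2]
end

section
/- Let f be a probability density on ℝ satisfying Assumption F, and let ε have density f. Let h : ℝ → ℝ be absolutely continuous with almost-everywhere derivative h′ such that E|h′(ε)| < ∞, E|ℓ(ε)h(ε)| < ∞, and h(z)f(z) → 0 as z → ±∞. Then E[h′(ε)] = E[ℓ(ε)h(ε)]. -/
/-!
On `U = {f ≠ 0}` the score satisfies `ℓ f = -f'`, so there `h' f - ℓ h f = h' f + h f'` is the
derivative of `h f`. On a compact interval inside `U` the density is bounded away from zero,
which makes `h'` and `f'` integrable, and the product rule for absolutely continuous functions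
integrates `h' f - ℓ h f` to the increment of `h f`. Each connected component of `U` is an open
interval whose finite endpoints are zeros of `f`; exhausting it by compact intervals and using
`h f → 0` at `±∞` shows that the integral over every component vanishes. Since the integrand
vanishes off `U` and `U` has countably many components,
`E[h'(ε)] - E[ℓ(ε) h(ε)] = ∫ (h' f - ℓ h f) = 0`.
-/

open MeasureTheory Filter Set Topology

section Primitive

variable {E : Type*} [NormedAddCommGroup E] [NormedSpace ℝ E]

/-- No integrability is assumed: where `g` is not interval integrable the integral is `0`. -/
theorem tendsto_intervalIntegral_nhdsGE (g : ℝ → E) (x : ℝ) :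
    Tendsto (fun y => ∫ t in x..y, g t) (𝓝[≥] x) (𝓝 0) := by
  by_cases hg : ∃ c > x, IntervalIntegrable g volume x c
  · obtain ⟨c, hxc, hgc⟩ := hg
    have hcont := intervalIntegral.continuousOn_primitive_interval' hgc left_mem_uIcc
    have := (hcont x left_mem_uIcc).mono_of_mem_nhdsWithin
      (by rw [uIcc_of_le hxc.le]; exact Icc_mem_nhdsGE hxc)
    simpa using this.tendsto
  · push Not at hg
    refine tendsto_const_nhds.congr' ?_
    filter_upwards [self_mem_nhdsWithin] with y (hy : x ≤ y)
    rcases hy.eq_or_lt with rfl | hlt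
    · simp
    · exact (intervalIntegral.integral_undef (hg y hlt)).symm

theorem tendsto_intervalIntegral_nhds (g : ℝ → E) (x : ℝ) :
    Tendsto (fun y => ∫ t in x..y, g t) (𝓝 x) (𝓝 0) := by
  rw [← nhdsLE_sup_nhdsGE, tendsto_sup]
  refine ⟨?_, tendsto_intervalIntegral_nhdsGE g x⟩
  have hneg : Tendsto Neg.neg (𝓝[≤] x) (𝓝[≥] (-x)) :=
    tendsto_nhdsWithin_iff.2 ⟨(continuous_neg.tendsto x).mono_left nhdsWithin_le_nhds,
      eventually_nhdsWithin_of_forall fun y (hy : y ≤ x) => neg_le_neg hy⟩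
  have := ((tendsto_intervalIntegral_nhdsGE (fun t => g (-t)) (-x)).comp hneg).neg
  rw [neg_zero] at this
  refine this.congr fun y => ?_
  simp only [Function.comp_apply, intervalIntegral.integral_comp_neg, neg_neg,
    intervalIntegral.integral_symm y x]

theorem continuous_of_forall_sub_eq_intervalIntegral {g g' : ℝ → E}
    (hg : ∀ a b, g b - g a = ∫ t in a..b, g' t) : Continuous g := by
  refine continuous_iff_continuousAt.2 fun x => ?_
  have := (tendsto_intervalIntegral_nhds g' x).const_add (g x)
  simpa [ContinuousAt, ← hg] using this

end Primitive

section ProductRule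

variable {f f' g g' : ℝ → ℝ}

theorem eq_add_intervalIntegral_of_forall_sub_eq (hf : ∀ a b, f b - f a = ∫ t in a..b, f' t)
    (a : ℝ) : f = fun x => f a + ∫ t in a..x, f' t :=
  funext fun x => eq_add_of_sub_eq' (hf a x)

theorem absolutelyContinuousOnInterval_of_forall_sub_eq
    (hf : ∀ a b, f b - f a = ∫ t in a..b, f' t) {a b : ℝ}
    (hfi : IntervalIntegrable f' volume a b) : AbsolutelyContinuousOnInterval f a b := by
  rw [eq_add_intervalIntegral_of_forall_sub_eq hf a]
  exact (LipschitzWith.const (f a)).lipschitzOnWith.absolutelyContinuousOnInterval.fun_add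
    (hfi.absolutelyContinuousOnInterval_intervalIntegral left_mem_uIcc)

theorem ae_hasDerivAt_of_forall_sub_eq (hf : ∀ a b, f b - f a = ∫ t in a..b, f' t) {a b : ℝ}
    (hfi : IntervalIntegrable f' volume a b) : ∀ᵐ x, x ∈ uIcc a b → HasDerivAt f (f' x) x := by
  filter_upwards [hfi.ae_hasDerivAt_integral] with x hx hxab
  rw [eq_add_intervalIntegral_of_forall_sub_eq hf a]
  exact (hx hxab a left_mem_uIcc).const_add _

theorem intervalIntegral_mul_add_mul_eq_sub_of_forall_sub_eq
    (hf : ∀ a b, f b - f a = ∫ t in a..b, f' t) (hg : ∀ a b, g b - g a = ∫ t in a..b, g' t)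
    {a b : ℝ} (hfi : IntervalIntegrable f' volume a b) (hgi : IntervalIntegrable g' volume a b) :
    ∫ x in a..b, f' x * g x + f x * g' x = f b * g b - f a * g a := by
  rw [← (absolutelyContinuousOnInterval_of_forall_sub_eq hf hfi).integral_deriv_mul_eq_sub
    (absolutelyContinuousOnInterval_of_forall_sub_eq hg hgi)]
  refine intervalIntegral.integral_congr_ae ?_
  filter_upwards [ae_hasDerivAt_of_forall_sub_eq hf hfi, ae_hasDerivAt_of_forall_sub_eq hg hgi]
    with x hfx hgx hx
  rw [(hfx (uIoc_subset_uIcc hx)).deriv, (hgx (uIoc_subset_uIcc hx)).deriv]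

end ProductRule

section Density

variable {Ω α : Type*} [MeasurableSpace Ω] [MeasurableSpace α] {μ : Measure Ω} {ν : Measure α}
  {ε : Ω → α} {f G : α → ℝ}

theorem integral_comp_eq_integral_mul_of_map_eq_withDensity (hε : Measurable ε)
    (hf : Measurable f) (hf0 : ∀ z, 0 ≤ f z)
    (hdens : μ.map ε = ν.withDensity fun z => ENNReal.ofReal (f z)) (hG : Measurable G) :
    ∫ ω, G (ε ω) ∂μ = ∫ z, G z * f z ∂ν := by
  rw [← integral_map hε.aemeasurable hG.aestronglyMeasurable, hdens,
    integral_withDensity_eq_integral_toReal_smul hf.ennreal_ofReal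
      (ae_of_all _ fun _ => ENNReal.ofReal_lt_top)]
  simp [ENNReal.toReal_ofReal (hf0 _), mul_comm]

theorem integrable_comp_iff_of_map_eq_withDensity (hε : Measurable ε)
    (hf : Measurable f) (hf0 : ∀ z, 0 ≤ f z)
    (hdens : μ.map ε = ν.withDensity fun z => ENNReal.ofReal (f z)) (hG : Measurable G) :
    Integrable (fun ω => G (ε ω)) μ ↔ Integrable (fun z => G z * f z) ν := by
  rw [← Function.comp_def, ← integrable_map_measure hG.aestronglyMeasurable hε.aemeasurable, hdens,
    integrable_withDensity_iff hf.ennreal_ofReal (ae_of_all _ fun _ => ENNReal.ofReal_lt_top)]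
  simp [ENNReal.toReal_ofReal (hf0 _)]

end Density

theorem integrable_mul_of_integrable_sq_mul {X : Type*} [MeasurableSpace X] {μ : Measure X}
    {ℓ f : X → ℝ} (hJ : Integrable (fun z => ℓ z ^ 2 * f z) μ) (hf : Integrable f μ)
    (hf0 : ∀ z, 0 ≤ f z) (hm : AEStronglyMeasurable (fun z => ℓ z * f z) μ) :
    Integrable (fun z => ℓ z * f z) μ := by
  refine (hJ.add hf).mono' hm (ae_of_all _ fun z => ?_)
  have : |ℓ z| ≤ ℓ z ^ 2 + 1 := by nlinarith [abs_nonneg (ℓ z), sq_abs (ℓ z)]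
  rw [norm_mul, Real.norm_eq_abs, Real.norm_of_nonneg (hf0 z)]
  simpa [add_mul] using mul_le_mul_of_nonneg_right this (hf0 z)

theorem integral_Ioc_mul_sub_score_mul_eq_sub {f f' h h' ℓ : ℝ → ℝ}
    (hfAC : ∀ a b, f b - f a = ∫ t in a..b, f' t) (hhAC : ∀ a b, h b - h a = ∫ t in a..b, h' t)
    (hfc : Continuous f) (hf0 : ∀ z, 0 ≤ f z) (hℓ : ℓ = fun z => -f' z / f z)
    (hℓm : Measurable ℓ) (hJ : Integrable fun z => ℓ z ^ 2 * f z)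
    (hh'f : Integrable fun z => h' z * f z) {x y : ℝ} (hxy : x ≤ y)
    (hU : Icc x y ⊆ {z | f z ≠ 0}) :
    ∫ z in Ioc x y, (h' z * f z - ℓ z * h z * f z) = h y * f y - h x * f x := by
  have hℓf : ∀ z, f z ≠ 0 → ℓ z * f z = -f' z := fun z hz => by
    rw [hℓ]; exact div_mul_cancel₀ _ hz
  have hf'i : IntervalIntegrable f' volume x y := by
    rw [intervalIntegrable_iff_integrableOn_Icc_of_le hxy]
    have : IntegrableOn (fun z => ℓ z * f z) (Icc x y) :=
      integrable_mul_of_integrable_sq_mul hJ.integrableOn hfc.integrableOn_Icc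
        hf0 (hℓm.mul hfc.measurable).aestronglyMeasurable
    exact this.neg.congr_fun (fun z hz => by simp [hℓf z (hU hz)]) measurableSet_Icc
  have hh'i : IntervalIntegrable h' volume x y := by
    rw [intervalIntegrable_iff_integrableOn_Icc_of_le hxy]
    have := hh'f.integrableOn.mul_continuousOn (hfc.continuousOn.inv₀ fun z hz => hU hz)
      isCompact_Icc
    exact this.congr_fun (fun z hz => mul_inv_cancel_right₀ (hU hz) _) measurableSet_Icc
  rw [← intervalIntegral.integral_of_le hxy,
    ← intervalIntegral_mul_add_mul_eq_sub_of_forall_sub_eq hhAC hfAC hh'i hf'i]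
  refine intervalIntegral.integral_congr fun z hz => ?_
  have := hℓf z (hU (by rwa [uIcc_of_le hxy] at hz))
  linear_combination (-h z) * this

section Components

theorem IsOpen.frontier_connectedComponentIn_subset_compl {X : Type*} [TopologicalSpace X]
    [LocallyConnectedSpace X] {U : Set X} (hU : IsOpen U) (x : X) :
    frontier (connectedComponentIn U x) ⊆ Uᶜ := by
  intro z hz hzU
  obtain ⟨y, hy⟩ := closure_nonempty_iff.1 ⟨z, hz.1⟩
  have hxU : x ∈ U := connectedComponentIn_nonempty_iff.1 ⟨y, hy⟩
  have hins : insert z (connectedComponentIn U x) ⊆ connectedComponentIn U x :=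
    (isPreconnected_connectedComponentIn.subset_closure (subset_insert _ _)
      (insert_subset hz.1 subset_closure)).subset_connectedComponentIn
      (mem_insert_of_mem _ (mem_connectedComponentIn hxU))
      (insert_subset hzU (connectedComponentIn_subset _ _))
  exact hz.2 (by rw [hU.connectedComponentIn.interior_eq]; exact hins (mem_insert _ _))

theorem IsOpen.setIntegral_eq_zero_of_forall_connectedComponentIn {X E : Type*}
    [TopologicalSpace X] [TopologicalSpace.SeparableSpace X] [LocallyConnectedSpace X]
    [MeasurableSpace X] [OpensMeasurableSpace X] [NormedAddCommGroup E] [NormedSpace ℝ E]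
    {μ : Measure X} {U : Set X} (hU : IsOpen U) {D : X → E} (hD : IntegrableOn D U μ)
    (h : ∀ x ∈ U, ∫ z in connectedComponentIn U x, D z ∂μ = 0) : ∫ z in U, D z ∂μ = 0 := by
  set 𝒞 := connectedComponentIn U '' U
  have hdisj : 𝒞.PairwiseDisjoint id := by
    rintro _ ⟨x, -, rfl⟩ _ ⟨y, -, rfl⟩ hne
    refine disjoint_left.2 fun z hzx hzy => hne ?_
    rw [connectedComponentIn_eq hzx, connectedComponentIn_eq hzy]
  have : Countable 𝒞 := (hdisj.countable_of_isOpen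
    (by rintro _ ⟨x, -, rfl⟩; exact hU.connectedComponentIn)
    (by rintro _ ⟨x, hx, rfl⟩; exact ⟨x, mem_connectedComponentIn hx⟩)).to_subtype
  have hUeq : U = ⋃ C : 𝒞, (C : Set X) := by
    refine Subset.antisymm (fun x hx => mem_iUnion.2 ⟨⟨_, x, hx, rfl⟩,
      mem_connectedComponentIn hx⟩) (iUnion_subset ?_)
    rintro ⟨_, x, -, rfl⟩
    exact connectedComponentIn_subset U x
  have hsum := integral_iUnion (μ := μ) (f := D) (s := fun C : 𝒞 => (C : Set X))
    (by rintro ⟨_, x, -, rfl⟩; exact hU.connectedComponentIn.measurableSet)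
    (fun C C' hCC' => hdisj C.2 C'.2 (Subtype.coe_injective.ne hCC')) (hUeq ▸ hD)
  have hzero : ∀ C : 𝒞, ∫ z in (C : Set X), D z ∂μ = 0 := by
    rintro ⟨_, x, hx, rfl⟩
    exact h x hx
  rw [← hUeq] at hsum
  simp [hsum, hzero]

variable {α β : Type*} [ConditionallyCompleteLinearOrder α] [TopologicalSpace α]
  [OrderTopology α] [FirstCountableTopology α] [DenselyOrdered α] [TopologicalSpace β] [Zero β]
  {C : Set α} {S : α → β}

theorem IsOpen.exists_seq_tendsto_lower_end [(atBot : Filter α).IsCountablyGenerated]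
    [NoMinOrder α] (hC : IsOpen C) (hne : C.Nonempty) (hS : Continuous S)
    (hfr : ∀ x ∈ frontier C, S x = 0) (hbot : Tendsto S atBot (𝓝 0)) :
    ∃ a : ℕ → α, (∀ n, a n ∈ C) ∧ (∀ x ∈ C, ∀ᶠ n in atTop, a n < x) ∧
      Tendsto (S ∘ a) atTop (𝓝 0) := by
  by_cases hbdd : BddBelow C
  · obtain ⟨a, -, ha, haC⟩ := exists_seq_tendsto_sInf hne hbdd
    have hnot : sInf C ∉ C := fun hmem => by
      obtain ⟨y, hy, hyC⟩ := Filter.Eventually.exists_lt (p := (· ∈ C)) (hC.mem_nhds hmem)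
      exact (csInf_le hbdd hyC).not_gt hy
    have hS0 : S (sInf C) = 0 := hfr _ ⟨csInf_mem_closure hne hbdd, by rwa [hC.interior_eq]⟩
    refine ⟨a, haC, fun x hx => ha.eventually (eventually_lt_nhds ?_), ?_⟩
    · exact (csInf_le hbdd hx).lt_of_ne fun h => hnot (h ▸ hx)
    · simpa [hS0] using (hS.tendsto _).comp ha
  · have : Nonempty α := ⟨hne.some⟩
    have hfreq : ∃ᶠ x in atBot, x ∈ C := frequently_atBot.2 fun x => by
      obtain ⟨y, hyC, hy⟩ := not_bddBelow_iff.1 hbdd x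
      exact ⟨y, hy.le, hyC⟩
    obtain ⟨a, ha, haC⟩ := exists_seq_forall_of_frequently hfreq
    exact ⟨a, haC, fun x _ => ha.eventually (eventually_lt_atBot x), hbot.comp ha⟩

theorem IsOpen.exists_seq_tendsto_upper_end [(atTop : Filter α).IsCountablyGenerated]
    [NoMaxOrder α] (hC : IsOpen C) (hne : C.Nonempty) (hS : Continuous S)
    (hfr : ∀ x ∈ frontier C, S x = 0) (htop : Tendsto S atTop (𝓝 0)) :
    ∃ b : ℕ → α, (∀ n, b n ∈ C) ∧ (∀ x ∈ C, ∀ᶠ n in atTop, x < b n) ∧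
      Tendsto (S ∘ b) atTop (𝓝 0) :=
  IsOpen.exists_seq_tendsto_lower_end (α := αᵒᵈ) hC hne hS hfr htop

end Components

section OpenSets

variable {D S : ℝ → ℝ}

theorem IsPreconnected.setIntegral_eq_zero_of_isOpen {C : Set ℝ} (hCc : IsPreconnected C)
    (hCo : IsOpen C) (hD : IntegrableOn D C) (hS : Continuous S)
    (hfr : ∀ x ∈ frontier C, S x = 0) (hbot : Tendsto S atBot (𝓝 0))
    (htop : Tendsto S atTop (𝓝 0))
    (hDS : ∀ x ∈ C, ∀ y ∈ C, x ≤ y → ∫ z in Ioc x y, D z = S y - S x) :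
    ∫ z in C, D z = 0 := by
  rcases C.eq_empty_or_nonempty with rfl | ⟨m, hm⟩
  · simp
  obtain ⟨a, haC, ha, hSa⟩ := hCo.exists_seq_tendsto_lower_end ⟨m, hm⟩ hS hfr hbot
  obtain ⟨b, hbC, hb, hSb⟩ := hCo.exists_seq_tendsto_upper_end ⟨m, hm⟩ hS hfr htop
  have hcover : AECover (volume.restrict C) atTop fun n => Ioc (a n) (b n) :=
    { ae_eventually_mem := (ae_restrict_mem hCo.measurableSet).mono fun x hx =>
        ((ha x hx).and (hb x hx)).mono fun _ h => ⟨h.1, h.2.le⟩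
      measurableSet _ := measurableSet_Ioc }
  refine hcover.integral_eq_of_tendsto 0 hD ?_
  have hlim : Tendsto (fun n => S (b n) - S (a n)) atTop (𝓝 0) := by
    simpa using hSb.sub hSa
  refine hlim.congr' ?_
  filter_upwards [ha m hm, hb m hm] with n ham hmb
  rw [Measure.restrict_restrict measurableSet_Ioc, inter_eq_left.2
    (Ioc_subset_Icc_self.trans (hCc.ordConnected.out (haC n) (hbC n))),
    hDS _ (haC n) _ (hbC n) (ham.trans hmb).le]

theorem IsOpen.setIntegral_eq_zero_of_forall_Icc_subset {U : Set ℝ} (hU : IsOpen U)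
    (hD : IntegrableOn D U) (hS : Continuous S) (hS0 : ∀ x ∉ U, S x = 0)
    (hbot : Tendsto S atBot (𝓝 0)) (htop : Tendsto S atTop (𝓝 0))
    (hDS : ∀ x y, x ≤ y → Icc x y ⊆ U → ∫ z in Ioc x y, D z = S y - S x) :
    ∫ z in U, D z = 0 :=
  hU.setIntegral_eq_zero_of_forall_connectedComponentIn hD fun m _ =>
    isPreconnected_connectedComponentIn.setIntegral_eq_zero_of_isOpen hU.connectedComponentIn
      (hD.mono_set (connectedComponentIn_subset U m)) hS
      (fun x hx => hS0 x (hU.frontier_connectedComponentIn_subset_compl m hx)) hbot htop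
      fun x hx y hy hxy => hDS x y hxy
        ((isPreconnected_connectedComponentIn.ordConnected.out hx hy).trans
          (connectedComponentIn_subset U m))

end OpenSets

theorem integration_by_parts_score_general
    {Ω : Type*} [MeasurableSpace Ω] (μ : Measure Ω)
    (ε : Ω → ℝ) (hε : Measurable ε)
    (f f' : ℝ → ℝ) (hf'm : Measurable f')
    (hfpos : ∀ z, 0 ≤ f z)
    (hfAC : ∀ a b : ℝ, f b - f a = ∫ z in a..b, f' z)
    (ℓ : ℝ → ℝ) (hℓ : ℓ = fun z => -f' z / f z)
    (hJ : Integrable fun z => ℓ z ^ 2 * f z)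
    (hdens : μ.map ε = (volume : Measure ℝ).withDensity fun z => ENNReal.ofReal (f z))
    (h h' : ℝ → ℝ) (hh'm : Measurable h')
    (hhAC : ∀ a b : ℝ, h b - h a = ∫ z in a..b, h' z)
    (hint1 : Integrable (fun ω => h' (ε ω)) μ)
    (hint2 : Integrable (fun ω => ℓ (ε ω) * h (ε ω)) μ)
    (hlim1 : Tendsto (fun z => h z * f z) atTop (nhds 0))
    (hlim2 : Tendsto (fun z => h z * f z) atBot (nhds 0)) :
    ∫ ω, h' (ε ω) ∂μ = ∫ ω, ℓ (ε ω) * h (ε ω) ∂μ := by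
  have hfc : Continuous f := continuous_of_forall_sub_eq_intervalIntegral hfAC
  have hhc : Continuous h := continuous_of_forall_sub_eq_intervalIntegral hhAC
  have hℓm : Measurable ℓ := hℓ ▸ hf'm.neg.div hfc.measurable
  have hℓhm : Measurable fun z => ℓ z * h z := hℓm.mul hhc.measurable
  have hh'f := (integrable_comp_iff_of_map_eq_withDensity hε hfc.measurable hfpos hdens hh'm).1
    hint1
  have hℓhf := (integrable_comp_iff_of_map_eq_withDensity hε hfc.measurable hfpos hdens hℓhm).1
    hint2
  rw [integral_comp_eq_integral_mul_of_map_eq_withDensity hε hfc.measurable hfpos hdens hh'm,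
    integral_comp_eq_integral_mul_of_map_eq_withDensity hε hfc.measurable hfpos hdens hℓhm,
    ← sub_eq_zero, ← integral_sub hh'f hℓhf,
    ← setIntegral_eq_integral_of_forall_compl_eq_zero (s := {z | f z ≠ 0})
      fun z (hz : ¬f z ≠ 0) => by simp [not_not.1 hz]]
  exact (isOpen_ne_fun hfc continuous_const).setIntegral_eq_zero_of_forall_Icc_subset
    (hh'f.sub hℓhf).integrableOn (hhc.mul hfc) (fun z (hz : ¬f z ≠ 0) => by simp [not_not.1 hz])
    hlim2 hlim1 fun x y hxy hU =>
      integral_Ioc_mul_sub_score_mul_eq_sub hfAC hhAC hfc hfpos hℓ hℓm hJ hh'f hxy hU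

/-- Under Assumption F, if `ε` has density `f` and `h` is absolutely
continuous with a.e. derivative `h'` such that `E|h'(ε)| < ∞`, `E|ℓ(ε)h(ε)| < ∞`, and
`h(z) f(z) → 0` as `z → ±∞`, then `E[h'(ε)] = E[ℓ(ε)h(ε)]`. -/
theorem integration_by_parts_score
    {Ω : Type*} [MeasurableSpace Ω] (μ : Measure Ω) [IsProbabilityMeasure μ]
    (ε : Ω → ℝ) (hε : Measurable ε)
    (f f' : ℝ → ℝ) (hf'm : Measurable f')
    (hfpos : ∀ z, 0 ≤ f z) (hfint : ∫ z, f z = 1)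
    (hfAC : ∀ a b : ℝ, f b - f a = ∫ z in a..b, f' z)
    (ℓ : ℝ → ℝ) (hℓ : ℓ = fun z => -f' z / f z)
    (hJ : Integrable fun z => ℓ z ^ 2 * f z)
    (hdens : μ.map ε = (volume : Measure ℝ).withDensity fun z => ENNReal.ofReal (f z))
    (h h' : ℝ → ℝ) (hh'm : Measurable h')
    (hhAC : ∀ a b : ℝ, h b - h a = ∫ z in a..b, h' z)
    (hint1 : Integrable (fun ω => h' (ε ω)) μ)
    (hint2 : Integrable (fun ω => ℓ (ε ω) * h (ε ω)) μ)
    (hlim1 : Tendsto (fun z => h z * f z) atTop (nhds 0))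
    (hlim2 : Tendsto (fun z => h z * f z) atBot (nhds 0)) :
    ∫ ω, h' (ε ω) ∂μ = ∫ ω, ℓ (ε ω) * h (ε ω) ∂μ :=
  integration_by_parts_score_general μ ε hε f f' hf'm hfpos hfAC ℓ hℓ hJ hdens h h' hh'm hhAC hint1
    hint2 hlim1 hlim2
end
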